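/- arXiv:1605.07084 — 8 statements merged into one kernel-verified Lean document; each statement's English description precedes it below -/
import Mathlib

section
/- Let S ⊆ [n] be a set that intersects every sensitive block of x with respect to f. Then the restriction of x to S is a certificate for x: every y ∈ {0,1}^n agreeing with x on S satisfies f(y) = f(x). -/
/-- Flip the bits of `x` in the block `B`. -/
def flipB {n : ℕ} (x : Fin n → Bool) (B : Finset (Fin n)) : Fin n → Bool :=
  fun i => if i ∈ B then !(x i) else x i

/-- If `S` intersects every sensitive block of `x`, then the restriction of `x`
to `S` is a certificate for `x`. -/
theorem restriction_is_certificate {n : ℕ} (f : (Fin n → Bool) → Bool)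
    (x : Fin n → Bool) (S : Finset (Fin n))
    (hS : ∀ B : Finset (Fin n), f (flipB x B) ≠ f x → (B ∩ S).Nonempty) :
    ∀ y : Fin n → Bool, (∀ i ∈ S, y i = x i) → f y = f x := by
  intro y hy
  set B : Finset (Fin n) := Finset.univ.filter (fun i => y i ≠ x i) with hB
  have hyB : flipB x B = y := by
    funext i
    simp only [flipB, hB, Finset.mem_filter, Finset.mem_univ, true_and]
    by_cases h : y i = x i <;> simp [h] <;> revert h <;> cases x i <;> cases y i <;> simp
  by_contra hne
  obtain ⟨i, hi⟩ := hS B (by rw [hyB]; exact hne)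
  rw [Finset.mem_inter, hB, Finset.mem_filter] at hi
  exact hi.1.2 (hy i hi.2)
end

section
/- For every non-constant Boolean function f : {0,1}^n → {0,1}, the block sensitivity satisfies bs(f) ≤ 2·UC_min(f) − 1. -/
/-- A partial assignment `p` is consistent with an input `x`. -/
def Consistent {n : ℕ} (p : Fin n → Option Bool) (x : Fin n → Bool) : Prop :=
  ∀ i b, p i = some b → x i = b

/-- Number of non-`*` entries of a partial assignment. -/
def suppCard {n : ℕ} (p : Fin n → Option Bool) : ℕ :=
  (Finset.univ.filter fun i => p i ≠ none).card

/-- `U` is an unambiguous collection of `b`-certificates for `f`: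
each element is a `b`-certificate, every `b`-input is consistent with some
element, and no two distinct elements are mutually consistent. -/
def UnambColl {n : ℕ} (f : (Fin n → Bool) → Bool) (b : Bool)
    (U : Set (Fin n → Option Bool)) : Prop :=
  (∀ p ∈ U, ∀ y, Consistent p y → f y = b) ∧
  (∀ x, f x = b → ∃ p ∈ U, Consistent p x) ∧
  (∀ p ∈ U, ∀ q ∈ U, p ≠ q → ¬∃ y, Consistent p y ∧ Consistent q y)

/-- Unambiguous certificate complexity for the value `b`. -/
noncomputable def UC {n : ℕ} (f : (Fin n → Bool) → Bool) (b : Bool) : ℕ :=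
  sInf {m : ℕ | ∃ U, UnambColl f b U ∧ ∀ p ∈ U, suppCard p ≤ m}

/-- Block sensitivity of `f`. -/
noncomputable def bsF {n : ℕ} (f : (Fin n → Bool) → Bool) : ℕ :=
  sSup {k : ℕ | ∃ (x : Fin n → Bool) (B : Fin k → Finset (Fin n)),
    (∀ j, f (flipB x (B j)) ≠ f x) ∧
    ∀ j j', j ≠ j' → Disjoint (B j) (B j')}

lemma UC_mem {n : ℕ} (f : (Fin n → Bool) → Bool) (b : Bool) :
    UC f b ∈ {m : ℕ | ∃ U, UnambColl f b U ∧ ∀ p ∈ U, suppCard p ≤ m} := by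
  apply Nat.sInf_mem
  refine ⟨n, {p | ∃ x, f x = b ∧ p = fun i => some (x i)}, ⟨?_, ?_, ?_⟩, ?_⟩
  · rintro p ⟨x, hx, rfl⟩ y hy
    have : y = x := funext fun i => hy i (x i) rfl
    rwa [this]
  · intro x hx
    exact ⟨_, ⟨x, hx, rfl⟩, fun i c h => Option.some_inj.mp h⟩
  · rintro p ⟨x, hx, rfl⟩ q ⟨x', hx', rfl⟩ hne ⟨y, hyp, hyq⟩
    have h1 : y = x := funext fun i => hyp i (x i) rfl
    have h2 : y = x' := funext fun i => hyq i (x' i) rfl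
    exact hne (by rw [h1.symm.trans h2])
  · rintro p ⟨x, hx, rfl⟩
    exact (Finset.card_filter_le _ _).trans (by simp)

/-- For every non-constant Boolean function, `bs(f) ≤ 2·UC_min(f) - 1`. -/
theorem bs_le_two_UCmin_sub_one {n : ℕ} (f : (Fin n → Bool) → Bool)
    (hnc : ∃ x y, f x ≠ f y) :
    bsF f ≤ 2 * min (UC f false) (UC f true) - 1 := by
  classical
  set m := min (UC f false) (UC f true) with hmdef
  obtain ⟨b, hb⟩ : ∃ b, UC f b = m := by
    rcases le_total (UC f false) (UC f true) with h | h
    · exact ⟨false, (min_eq_left h).symm⟩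
    · exact ⟨true, (min_eq_right h).symm⟩
  obtain ⟨U, ⟨hcert, hcover, hunamb⟩, hUm⟩ := UC_mem f b
  rw [hb] at hUm
  -- m ≥ 1
  have hx0 : ∃ x0, f x0 = b := by
    rcases hnc with ⟨x, y, hxy⟩
    by_cases h : f x = b
    · exact ⟨x, h⟩
    · refine ⟨y, ?_⟩
      revert hxy h; cases f x <;> cases f y <;> cases b <;> simp
  have hm1 : 1 ≤ m := by
    obtain ⟨x0, hx0⟩ := hx0
    obtain ⟨p, hpU, hpx⟩ := hcover x0 hx0
    have hle := hUm p hpU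
    rcases Nat.eq_zero_or_pos (suppCard p) with h0 | h0
    · exfalso
      have hall : ∀ i, p i = none := by
        intro i
        by_contra hi
        have hmem : i ∈ Finset.univ.filter (fun i => p i ≠ none) := by simp [hi]
        rw [suppCard, Finset.card_eq_zero] at h0
        rw [h0] at hmem
        exact absurd hmem (Finset.notMem_empty i)
      have hconst : ∀ y, f y = b := fun y =>
        hcert p hpU y (fun i c hc => absurd hc (by simp [hall i]))
      rcases hnc with ⟨x, y, hxy⟩
      exact hxy ((hconst x).trans (hconst y).symm)
    · omega
  refine csSup_le' ?_
  rintro k ⟨x, B, hsens, hdisj⟩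
  by_cases hfx : f x = b
  · -- Case 1: the certificate of x must hit every block
    obtain ⟨p, hpU, hpx⟩ := hcover x hfx
    have hblock : ∀ j : Fin k, ∃ i, i ∈ B j ∧ p i ≠ none := by
      intro j
      by_contra h
      push_neg at h
      have hcons : Consistent p (flipB x (B j)) := by
        intro i c hc
        have hiB : i ∉ B j := fun hi => by simp [h i hi] at hc
        simpa [flipB, hiB] using hpx i c hc
      exact hsens j ((hcert p hpU _ hcons).trans hfx.symm)
    choose g hg1 hg2 using hblock
    have hinj : k ≤ suppCard p := by
      rw [suppCard]
      have h := Finset.card_le_card_of_injOn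
        (s := (Finset.univ : Finset (Fin k)))
        (t := Finset.univ.filter fun i => p i ≠ none) g
        (fun j _ => Finset.mem_filter.mpr ⟨Finset.mem_univ _, hg2 j⟩) ?_
      · simpa using h
      · intro j1 _ j2 _ hgg
        by_contra hne
        exact (Finset.disjoint_left.mp (hdisj j1 j2 hne)) (hg1 j1) (hgg ▸ hg1 j2)
    have := hUm p hpU
    omega
  · -- Case 2: f x ≠ b
    have hflip : ∀ j : Fin k, f (flipB x (B j)) = b := by
      intro j
      have h1 := hsens j
      revert h1 hfx
      cases f (flipB x (B j)) <;> cases f x <;> cases b <;> simp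
    choose p hpU hpc using fun j => hcover _ (hflip j)
    have fact1 : ∀ j : Fin k, ∃ i, i ∈ B j ∧ p j i ≠ none := by
      intro j
      by_contra h
      push_neg at h
      have hcons : Consistent (p j) x := by
        intro i c hc
        have hiB : i ∉ B j := fun hi => by simp [h i hi] at hc
        simpa [flipB, hiB] using hpc j i c hc
      exact hfx (hcert _ (hpU j) x hcons)
    have fact2 : ∀ j j' : Fin k, j ≠ j' → p j ≠ p j' := by
      intro j j' hne he
      obtain ⟨i, hiB, hine⟩ := fact1 j'
      obtain ⟨c, hc⟩ := Option.ne_none_iff_exists'.mp hine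
      have hiBj : i ∉ B j := Finset.disjoint_left.mp (hdisj j' j (Ne.symm hne)) hiB
      have h1 : x i = c := by simpa [flipB, hiBj] using hpc j i c (he ▸ hc)
      have h2 : (!(x i)) = c := by simpa [flipB, hiB] using hpc j' i c hc
      rw [h1] at h2
      simp at h2
    have fact3 : ∀ j j' : Fin k, j ≠ j' →
        ∃ i c c', p j i = some c ∧ p j' i = some c' ∧ c ≠ c' := by
      intro j j' hne
      by_contra hcon
      push_neg at hcon
      apply hunamb (p j) (hpU j) (p j') (hpU j') (fact2 j j' hne)
      refine ⟨fun i => (p j i).elim ((p j' i).getD false) id, ?_, ?_⟩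
      · intro i c hc; simp [hc]
      · intro i c' hc'
        cases hji : p j i with
        | none => simp [hji, hc']
        | some c => simpa [hji] using hcon i c c' hji hc'
    have hloc : ∀ j j' : Fin k, j ≠ j' →
        (∃ i, i ∈ B j' ∧ p j i ≠ none) ∨ (∃ i, i ∈ B j ∧ p j' i ≠ none) := by
      intro j j' hne
      obtain ⟨i, c, c', hc, hc', hcc⟩ := fact3 j j' hne
      have hv : flipB x (B j) i ≠ flipB x (B j') i := by
        rw [hpc j i c hc, hpc j' i c' hc']
        exact hcc
      have hmem : i ∈ B j ∨ i ∈ B j' := by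
        by_contra h
        push_neg at h
        exact hv (by simp [flipB, h.1, h.2])
      rcases hmem with h | h
      · exact Or.inr ⟨i, h, by simp [hc']⟩
      · exact Or.inl ⟨i, h, by simp [hc]⟩
    set Hits : Fin k → Finset (Fin k) :=
      fun j => Finset.univ.filter (fun j' => j' ≠ j ∧ ∃ i ∈ B j', p j i ≠ none)
      with hHits
    obtain ⟨i0, -, -⟩ : ∃ i0 : Fin n, True ∧ True := by
      rcases Nat.eq_zero_or_pos n with h | h
      · exfalso; rcases hnc with ⟨x1, y1, hxy⟩
        subst h
        exact hxy (congrArg f (funext fun i => i.elim0))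
      · exact ⟨⟨0, h⟩, trivial, trivial⟩
    have houtdeg : ∀ j, (Hits j).card + 1 ≤ m := by
      intro j
      have hins : ∀ j' ∈ insert j (Hits j), ∃ i, i ∈ B j' ∧ p j i ≠ none := by
        intro j' hj'
        rcases Finset.mem_insert.mp hj' with rfl | hj'
        · exact fact1 j'
        · obtain ⟨-, i, hi, hpi⟩ := (Finset.mem_filter.mp hj').2
          exact ⟨i, hi, hpi⟩
      have hcard : (insert j (Hits j)).card ≤ suppCard (p j) := by
        rw [suppCard]
        apply Finset.card_le_card_of_injOn
          (fun j' => if h : ∃ i, i ∈ B j' ∧ p j i ≠ none then h.choose else i0)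
        · intro j' hj'
          have h := hins j' hj'
          simp only [dif_pos h]
          simp [h.choose_spec.2]
        · intro j1 h1 j2 h2 heq
          by_contra hne12
          have hh1 := hins j1 h1
          have hh2 := hins j2 h2
          simp only [dif_pos hh1, dif_pos hh2] at heq
          exact Finset.disjoint_left.mp (hdisj j1 j2 hne12) hh1.choose_spec.1
            (heq ▸ hh2.choose_spec.1)
      have hjnot : j ∉ Hits j := by simp [hHits]
      rw [Finset.card_insert_of_notMem hjnot] at hcard
      have := hUm (p j) (hpU j)
      omega
    have htot : ∀ j j' : Fin k, j ≠ j' → j' ∈ Hits j ∨ j ∈ Hits j' := by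
      intro j j' hne
      rcases hloc j j' hne with h | h
      · left
        simp only [hHits, Finset.mem_filter]
        exact ⟨Finset.mem_univ _, Ne.symm hne, h⟩
      · right
        simp only [hHits, Finset.mem_filter]
        exact ⟨Finset.mem_univ _, hne, h⟩
    set T : Finset (Fin k × Fin k) :=
      Finset.univ.biUnion (fun j => (Hits j).image fun j' => (j, j')) with hT
    have hTcard : T.card ≤ k * (m - 1) := by
      calc T.card ≤ ∑ j, ((Hits j).image fun j' => (j, j')).card :=
            Finset.card_biUnion_le
        _ ≤ ∑ _j : Fin k, (m - 1) := Finset.sum_le_sum (fun j _ =>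
            (Finset.card_image_le).trans (by have := houtdeg j; omega))
        _ = k * (m - 1) := by simp [Finset.sum_const, Finset.card_univ, mul_comm]
    have hS : ((Finset.univ : Finset (Fin k)).offDiag).card ≤ 2 * T.card := by
      apply Finset.card_le_mul_card_image_of_maps_to
        (f := fun q : Fin k × Fin k => if q.2 ∈ Hits q.1 then q else q.swap)
      · intro q hq
        have hne : q.1 ≠ q.2 := (Finset.mem_offDiag.mp hq).2.2
        by_cases h : q.2 ∈ Hits q.1
        · have : (q.1, q.2) ∈ T :=
            Finset.mem_biUnion.mpr ⟨q.1, Finset.mem_univ _,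
              Finset.mem_image.mpr ⟨q.2, h, rfl⟩⟩
          simpa [h] using this
        · have h2 : q.1 ∈ Hits q.2 := (htot q.1 q.2 hne).resolve_left h
          have : (q.2, q.1) ∈ T :=
            Finset.mem_biUnion.mpr ⟨q.2, Finset.mem_univ _,
              Finset.mem_image.mpr ⟨q.1, h2, rfl⟩⟩
          simpa [h, Prod.swap] using this
      · intro a _
        have hsub : ((Finset.univ : Finset (Fin k)).offDiag.filter
            (fun q => (if q.2 ∈ Hits q.1 then q else q.swap) = a)) ⊆ {a, a.swap} := by
          intro q hq
          have hφ := (Finset.mem_filter.mp hq).2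
          by_cases h : q.2 ∈ Hits q.1
          · rw [if_pos h] at hφ
            simp [hφ]
          · rw [if_neg h] at hφ
            have : q = a.swap := by rw [← hφ, Prod.swap_swap]
            simp [this]
        exact (Finset.card_le_card hsub).trans
          ((Finset.card_insert_le _ _).trans (by simp))
    -- combine
    have hoff : ((Finset.univ : Finset (Fin k)).offDiag).card = k * k - k := by
      rw [Finset.offDiag_card]
      simp
    rcases Nat.eq_zero_or_pos k with hk0 | hk0
    · omega
    · have hmain : k * k - k ≤ 2 * (k * (m - 1)) := by
        rw [← hoff]
        exact hS.trans (by omega)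
      have hmul : k * (k - 1) ≤ k * (2 * (m - 1)) := by
        have e1 : k * (k - 1) = k * k - k := by
          rw [Nat.mul_sub, mul_one]
        rw [e1]
        calc k * k - k ≤ 2 * (k * (m - 1)) := hmain
          _ = k * (2 * (m - 1)) := by ring
      have := Nat.le_of_mul_le_mul_left hmul hk0
      omega
end

section
/- If B₁ and B₂ are two distinct minimal sensitive blocks of x with respect to f, and p₁, p₂ are certificates consistent with x^{B₁} and x^{B₂} respectively (each certifying the value f(x^{B₁}) = f(x^{B₂}) ≠ f(x)), then p₁ ≠ p₂. -/
/-- Distinct minimal sensitive blocks give distinct unambiguous certificates. -/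
theorem certificates_of_distinct_minimal_blocks_differ {n : ℕ}
    (f : (Fin n → Bool) → Bool) (x : Fin n → Bool) (hx : f x = false)
    (B₁ B₂ : Finset (Fin n)) (hne : B₁ ≠ B₂)
    (hB₁ : f (flipB x B₁) = true) (hB₁min : ∀ B' ⊂ B₁, f (flipB x B') = false)
    (hB₂ : f (flipB x B₂) = true) (hB₂min : ∀ B' ⊂ B₂, f (flipB x B') = false)
    (p₁ p₂ : Fin n → Option Bool)
    (hp₁ : Consistent p₁ (flipB x B₁)) (hc₁ : ∀ y, Consistent p₁ y → f y = true)
    (hp₂ : Consistent p₂ (flipB x B₂)) (hc₂ : ∀ y, Consistent p₂ y → f y = true) :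
    p₁ ≠ p₂ := by
  intro heq
  subst heq
  -- p₁ is consistent with flipB x (B₁ ∩ B₂)
  have hcons : Consistent p₁ (flipB x (B₁ ∩ B₂)) := by
    intro i b hib
    have h1 := hp₁ i b hib
    have h2 := hp₂ i b hib
    simp only [flipB, Finset.mem_inter] at *
    by_cases hi1 : i ∈ B₁ <;> by_cases hi2 : i ∈ B₂ <;> simp_all
  have hfy : f (flipB x (B₁ ∩ B₂)) = true := hc₁ _ hcons
  by_cases hsub : B₁ ⊆ B₂
  · have : B₁ ⊂ B₂ := hsub.ssubset_of_ne hne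
    have := hB₂min B₁ this
    simp_all
  · have : B₁ ∩ B₂ ⊂ B₁ := by
      refine Finset.ssubset_iff_subset_ne.mpr ⟨Finset.inter_subset_left, ?_⟩
      intro h
      exact hsub (Finset.inter_eq_left.mp h)
    have := hB₁min _ this
    simp_all
end

section
/- For every k ≥ 0, there exists a Boolean function f on n = 2k+1 variables with s(f) = bs(f) = n and UC_1(f) ≤ k+1. Concretely, let p_i (for 0 ≤ i ≤ 2k) be the cyclic shifts of the pattern 0^k 1 *^k, and define f(x) = 1 iff some p_i ⊆ x. Then (a) the p_i are pairwise inconsistent, forming an unambiguous collection of 1-certificates of size k+1; (b) f(0^n) = 0 and f(e_i) = 1 for every standard basis vector e_i, so the all-zeros input has sensitivity n. -/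
/-- Sensitivity of `f`. -/
noncomputable def sF {n : ℕ} (f : (Fin n → Bool) → Bool) : ℕ :=
  sSup {m : ℕ | ∃ x : Fin n → Bool,
    m = (Finset.univ.filter fun i : Fin n => f (flipB x {i}) ≠ f x).card}

/-- The base pattern `0^k 1 *^k`. -/
def pat (k : ℕ) : Fin (2 * k + 1) → Option Bool :=
  fun j => if (j : ℕ) < k then some false
    else if (j : ℕ) = k then some true else none

/-- The `i`-th cyclic shift of the pattern `0^k 1 *^k`. -/
def patShift (k : ℕ) (i : Fin (2 * k + 1)) : Fin (2 * k + 1) → Option Bool :=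
  fun j => pat k (j + i)

/-- The function `f(x) = 1` iff some cyclic shift `p_i` satisfies `p_i ⊆ x`. -/
def fCyc (k : ℕ) : (Fin (2 * k + 1) → Bool) → Bool :=
  fun x => decide (∃ i, ∀ j b, patShift k i j = some b → x j = b)

section ComplexityMeasures

variable {n : ℕ}

@[simp]
lemma flipB_empty (x : Fin n → Bool) : flipB x ∅ = x := by
  funext i; simp [flipB]

lemma sF_eq_of_forall_flip_ne {f : (Fin n → Bool) → Bool} {x : Fin n → Bool}
    (hx : ∀ i, f (flipB x {i}) ≠ f x) : sF f = n := by
  refine IsGreatest.csSup_eq ⟨⟨x, ?_⟩, ?_⟩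
  · simp [hx]
  · rintro m ⟨y, rfl⟩
    exact (Finset.card_filter_le _ _).trans_eq (Finset.card_fin n)

lemma bsF_eq_of_forall_flip_ne {f : (Fin n → Bool) → Bool} {x : Fin n → Bool}
    (hx : ∀ i, f (flipB x {i}) ≠ f x) : bsF f = n := by
  refine IsGreatest.csSup_eq ⟨⟨x, fun i => {i}, hx, fun i j hij => by simpa using hij⟩, ?_⟩
  rintro m ⟨y, B, hB, hdisj⟩
  -- every sensitive block is nonempty, so picking a point from each is injective
  have hne : ∀ j, (B j).Nonempty := fun j =>
    Finset.nonempty_iff_ne_empty.2 fun he => hB j (by rw [he, flipB_empty])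
  have hinj : Function.Injective fun j => (hne j).choose := by
    intro a b hab
    by_contra hne'
    exact Finset.disjoint_left.mp (hdisj a b hne') (hne a).choose_spec
      ((congrArg (· ∈ B b) hab).mpr (hne b).choose_spec)
  simpa using Fintype.card_le_of_injective _ hinj

lemma unambColl_of_pairwise_inconsistent {ι : Type*} {f : (Fin n → Bool) → Bool}
    {P : ι → Fin n → Option Bool} (hf : ∀ x, f x = true ↔ ∃ i, Consistent (P i) x)
    (hP : ∀ i i', i ≠ i' → ¬∃ y, Consistent (P i) y ∧ Consistent (P i') y) :
    UnambColl f true {p | ∃ i, p = P i} := by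
  refine ⟨?_, ?_, ?_⟩
  · rintro p ⟨i, rfl⟩ y hy
    exact (hf y).2 ⟨i, hy⟩
  · intro x hx
    obtain ⟨i, hi⟩ := (hf x).1 hx
    exact ⟨P i, ⟨i, rfl⟩, hi⟩
  · rintro p ⟨i, rfl⟩ q ⟨i', rfl⟩ hpq
    exact hP i i' fun h => hpq (h ▸ rfl)

lemma suppCard_comp_equiv (p : Fin n → Option Bool) (e : Fin n ≃ Fin n) :
    suppCard (p ∘ e) = suppCard p := by
  unfold suppCard
  exact Finset.card_bij' (fun i _ => e i) (fun i _ => e.symm i)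
    (by simp) (by simp) (by simp) (by simp)

end ComplexityMeasures

section CyclicPattern

variable (k : ℕ)

def patOne : Fin (2 * k + 1) := ⟨k, by omega⟩

lemma patShift_eq_some_true_iff (i j : Fin (2 * k + 1)) :
    patShift k i j = some true ↔ j = patOne k - i := by
  rw [eq_sub_iff_add_eq, Fin.ext_iff]
  simp only [patShift, pat, patOne]
  split_ifs <;> simp <;> omega

lemma patShift_eq_some_false_iff (i j : Fin (2 * k + 1)) :
    patShift k i j = some false ↔ ((j + i : Fin (2 * k + 1)) : ℕ) < k := by
  simp only [patShift, pat]
  split_ifs <;> simp <;> omega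

lemma consistent_patShift_iff (i : Fin (2 * k + 1)) (y : Fin (2 * k + 1) → Bool) :
    Consistent (patShift k i) y ↔
      y (patOne k - i) = true ∧ ∀ j, ((j + i : Fin (2 * k + 1)) : ℕ) < k → y j = false := by
  constructor
  · intro hy
    exact ⟨hy _ _ ((patShift_eq_some_true_iff k i _).2 rfl),
      fun j hj => hy _ _ ((patShift_eq_some_false_iff k i j).2 hj)⟩
  · rintro ⟨hone, hzero⟩ j (_ | _) hb
    · exact hzero j ((patShift_eq_some_false_iff k i j).1 hb)
    · rwa [(patShift_eq_some_true_iff k i j).1 hb]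

lemma patOne_add_lt_or_patOne_sub_lt {d : Fin (2 * k + 1)} (hd : d ≠ 0) :
    ((patOne k + d : Fin (2 * k + 1)) : ℕ) < k ∨ ((patOne k - d : Fin (2 * k + 1)) : ℕ) < k := by
  have hd' : (d : ℕ) ≠ 0 := Fin.val_ne_iff.2 hd
  have hone : (patOne k : ℕ) = k := rfl
  by_cases hdk : (d : ℕ) ≤ k
  · right
    rw [Fin.sub_val_of_le (Fin.le_def.2 (by rwa [hone])), hone]
    omega
  · left
    have := d.isLt
    rw [Fin.val_add, hone, Nat.mod_eq_sub_mod (by omega), Nat.mod_eq_of_lt (by omega)]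
    omega

lemma patShift_pairwise_inconsistent (i i' : Fin (2 * k + 1)) (h : i ≠ i') :
    ¬∃ y, Consistent (patShift k i) y ∧ Consistent (patShift k i') y := by
  rintro ⟨y, hy, hy'⟩
  rw [consistent_patShift_iff] at hy hy'
  have hd : i' - i ≠ 0 := sub_ne_zero.2 (Ne.symm h)
  rcases patOne_add_lt_or_patOne_sub_lt k hd with hlt | hlt
  · have := hy'.2 (patOne k - i) (by rwa [show patOne k - i + i' = patOne k + (i' - i) by abel])
    simp [hy.1] at this
  · have := hy.2 (patOne k - i') (by rwa [show patOne k - i' + i = patOne k - (i' - i) by abel])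
    simp [hy'.1] at this

lemma suppCard_pat : suppCard (pat k) = k + 1 := by
  have : (Finset.univ.filter fun j : Fin (2 * k + 1) => pat k j ≠ none) =
      Finset.univ.filter fun j : Fin (2 * k + 1) => (j : ℕ) < k + 1 := by
    refine Finset.filter_congr fun j _ => ?_
    simp only [pat]
    split_ifs <;> simp <;> omega
  rw [suppCard, this, Fin.card_filter_val_lt]
  omega

lemma suppCard_patShift (i : Fin (2 * k + 1)) : suppCard (patShift k i) = k + 1 :=
  (suppCard_comp_equiv (pat k) (Equiv.addRight i)).trans (suppCard_pat k)

lemma fCyc_eq_true_iff (x : Fin (2 * k + 1) → Bool) :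
    fCyc k x = true ↔ ∃ i, Consistent (patShift k i) x :=
  decide_eq_true_iff

lemma fCyc_zero : fCyc k (fun _ => false) = false := by
  rw [← Bool.not_eq_true, fCyc_eq_true_iff]
  rintro ⟨i, hi⟩
  simpa using ((consistent_patShift_iff k i _).1 hi).1

lemma fCyc_flipB_single_zero (i : Fin (2 * k + 1)) :
    fCyc k (flipB (fun _ => false) {i}) = true := by
  refine (fCyc_eq_true_iff k _).2 ⟨patOne k - i, (consistent_patShift_iff k _ _).2 ⟨?_, ?_⟩⟩
  · simp [flipB]
  · rintro j hj
    have hji : j ≠ i := by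
      rintro rfl
      simp [patOne] at hj
    simp [flipB, hji]

end CyclicPattern

/-- A function on `n = 2k+1` variables with `s(f) = bs(f) = n` while
`UC_1(f) ≤ k + 1`: the tightness example for `bs(f) ≤ 2·UC_min(f) - 1`. -/
theorem tightness_example (k : ℕ) :
    (∀ i i' : Fin (2 * k + 1), i ≠ i' →
      ¬∃ y, Consistent (patShift k i) y ∧ Consistent (patShift k i') y) ∧
    (∀ i, suppCard (patShift k i) = k + 1) ∧
    (∀ i, ∀ y, Consistent (patShift k i) y → fCyc k y = true) ∧
    (∀ y, fCyc k y = true → ∃ i, Consistent (patShift k i) y) ∧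
    UnambColl (fCyc k) true {p | ∃ i, p = patShift k i} ∧
    UC (fCyc k) true ≤ k + 1 ∧
    fCyc k (fun _ => false) = false ∧
    (∀ i : Fin (2 * k + 1), fCyc k (flipB (fun _ => false) {i}) = true) ∧
    sF (fCyc k) = 2 * k + 1 ∧
    bsF (fCyc k) = 2 * k + 1 := by
  have hunamb : UnambColl (fCyc k) true {p | ∃ i, p = patShift k i} :=
    unambColl_of_pairwise_inconsistent (fCyc_eq_true_iff k) (patShift_pairwise_inconsistent k)
  have hsens : ∀ i, fCyc k (flipB (fun _ => false) {i}) ≠ fCyc k (fun _ => false) := fun i => by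
    rw [fCyc_flipB_single_zero, fCyc_zero]
    decide
  refine ⟨patShift_pairwise_inconsistent k, suppCard_patShift k,
    fun i y hy => (fCyc_eq_true_iff k y).2 ⟨i, hy⟩, fun y => (fCyc_eq_true_iff k y).1, hunamb,
    ?_, fCyc_zero k, fCyc_flipB_single_zero k, sF_eq_of_forall_flip_ne hsens,
    bsF_eq_of_forall_flip_ne hsens⟩
  exact Nat.sInf_le ⟨_, hunamb, by rintro p ⟨i, rfl⟩; exact (suppCard_patShift k i).le⟩
end

section
/- For every Boolean function f : {0,1}^n → {0,1} with s_0(f) = 1, the tree sensitivity of f equals its sensitivity: ts(f) = s(f). -/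
lemma flipB_flipB {n : ℕ} (x : Fin n → Bool) (B : Finset (Fin n)) :
    flipB (flipB x B) B = x := by
  funext i
  by_cases h : i ∈ B <;> simp [flipB, h]

/-- The sensitivity graph of `f`: the subgraph of the hypercube keeping the
edges `{x, x^i}` with `f(x) ≠ f(x^i)`. -/
def sensGraph {n : ℕ} (f : (Fin n → Bool) → Bool) :
    SimpleGraph (Fin n → Bool) where
  Adj x y := f x ≠ f y ∧ ∃ i : Fin n, y = flipB x {i}
  symm := by
    constructor
    rintro x y ⟨hf, i, rfl⟩
    exact ⟨hf.symm, i, (flipB_flipB x {i}).symm⟩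
  loopless := by
    constructor
    rintro x ⟨hf, -⟩
    exact hf rfl

/-- Tree sensitivity of `f`: the maximum number of vertices of a subtree of the
sensitivity graph using at most one edge in each coordinate direction. -/
noncomputable def tsF {n : ℕ} (f : (Fin n → Bool) → Bool) : ℕ :=
  sSup {m : ℕ | ∃ H : (sensGraph f).Subgraph,
    m = H.verts.ncard ∧ H.coe.IsTree ∧
    ∀ i : Fin n, ∀ x y : Fin n → Bool,
      H.Adj x (flipB x {i}) → H.Adj y (flipB y {i}) →
      x = y ∨ x = flipB y {i}}

/-- Sensitivity of `f`, measured as the size of the largest sensitive star: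
`max_x (1 + number of sensitive coordinates of x)`. -/
noncomputable def sStar {n : ℕ} (f : (Fin n → Bool) → Bool) : ℕ :=
  sSup {m : ℕ | ∃ x : Fin n → Bool,
    m = 1 + (Finset.univ.filter fun i : Fin n => f (flipB x {i}) ≠ f x).card}

/-- 0-sensitivity of `f`. -/
noncomputable def s0F {n : ℕ} (f : (Fin n → Bool) → Bool) : ℕ :=
  sSup {m : ℕ | ∃ x : Fin n → Bool, f x = false ∧
    m = (Finset.univ.filter fun i : Fin n => f (flipB x {i}) ≠ f x).card}

/-!
Every edge of the sensitivity graph joins a 0-input to a 1-input. When each 0-input has at most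
one sensitive coordinate, the neighbours of a 1-input `c` have no neighbour other than `c`, so
each connected component of the sensitivity graph lies inside the star around a single vertex.
Hence every connected subgraph, in particular every sensitive tree, has at most as many vertices
as the largest star, while each star is itself a sensitive tree using every direction at most once.
-/

open Finset

namespace SimpleGraph

variable {V : Type*} {G : SimpleGraph V}

lemma Reachable.eq_or_adj_of_forall_adj_adj_eq {c v : V}
    (hc : ∀ u w, G.Adj c u → G.Adj u w → w = c) (h : G.Reachable c v) : v = c ∨ G.Adj c v := by
  rw [reachable_iff_reflTransGen] at h
  induction h with
  | refl => exact .inl rfl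
  | tail _ hab ih =>
    rcases ih with rfl | hcb
    · exact .inr hab
    · exact .inl (hc _ _ hcb hab)

lemma isAcyclic_of_forall_adj_eq_or_eq (c : V) (h : ∀ a b, G.Adj a b → a = c ∨ b = c) :
    G.IsAcyclic := by
  intro v p hp
  have hlen := hp.three_le_length
  -- An inner vertex of the cycle other than `c` would have `c` on both sides.
  have hinner : ∀ i, 1 ≤ i → i < p.length → p.getVert i = c := by
    intro i hi hil
    by_contra hne
    apply hp.getVert_sub_one_ne_getVert_add_one hil.le
    have hprev := h _ _ (p.adj_getVert_succ (i := i - 1) (by omega))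
    have hnext := h _ _ (p.adj_getVert_succ hil)
    rw [Nat.sub_add_cancel hi] at hprev
    rw [hprev.resolve_right hne, hnext.resolve_left hne]
  have hadj := p.adj_getVert_succ (i := 1) (by omega)
  rw [hinner 1 le_rfl (by omega), hinner 2 (by omega) (by omega)] at hadj
  exact hadj.ne rfl

def starSubgraph (G : SimpleGraph V) (x : V) : G.Subgraph where
  verts := insert x (G.neighborSet x)
  Adj a b := G.Adj a b ∧ (a = x ∨ b = x)
  adj_sub h := h.1
  edge_vert := by
    rintro a b ⟨hab, rfl | rfl⟩
    · exact Set.mem_insert _ _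
    · exact Set.mem_insert_of_mem _ hab.symm
  symm := ⟨fun _ _ h => ⟨h.1.symm, h.2.symm⟩⟩

@[simp]
lemma mem_starSubgraph_verts {x v : V} : v ∈ (G.starSubgraph x).verts ↔ v = x ∨ G.Adj x v :=
  Iff.rfl

@[simp]
lemma starSubgraph_adj {x a b : V} : (G.starSubgraph x).Adj a b ↔ G.Adj a b ∧ (a = x ∨ b = x) :=
  Iff.rfl

lemma IsTree.coe_starSubgraph (x : V) : (G.starSubgraph x).coe.IsTree := by
  let c : (G.starSubgraph x).verts := ⟨x, mem_starSubgraph_verts.mpr (.inl rfl)⟩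
  have hreach : ∀ u, (G.starSubgraph x).coe.Reachable c u := by
    rintro ⟨u, rfl | hu⟩
    · rfl
    · exact Adj.reachable (G := (G.starSubgraph x).coe) ⟨hu, .inl rfl⟩
  refine ⟨(connected_iff_exists_forall_reachable _).mpr ⟨c, hreach⟩,
    isAcyclic_of_forall_adj_eq_or_eq c ?_⟩
  rintro a b ⟨-, ha | hb⟩
  · exact .inl (Subtype.ext ha)
  · exact .inr (Subtype.ext hb)

lemma ncard_verts_starSubgraph [Finite V] (x : V) :
    (G.starSubgraph x).verts.ncard = (G.neighborSet x).ncard + 1 :=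
  Set.ncard_insert_of_notMem (G.notMem_neighborSet_self)

end SimpleGraph

open SimpleGraph

variable {n : ℕ}

lemma flipB_single_injective (x : Fin n → Bool) : Function.Injective fun i => flipB x {i} := by
  intro i j hij
  by_contra hne
  simpa [flipB, hne] using congrFun hij i

lemma neighborSet_sensGraph (f : (Fin n → Bool) → Bool) (x : Fin n → Bool) :
    (sensGraph f).neighborSet x =
      (fun i => flipB x {i}) '' ↑({i | f (flipB x {i}) ≠ f x} : Finset (Fin n)) := by
  ext y
  simp only [mem_neighborSet, sensGraph, coe_filter, mem_univ, true_and, Set.mem_image,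
    Set.mem_ofPred_eq]
  constructor
  · rintro ⟨hf, i, rfl⟩
    exact ⟨i, Ne.symm hf, rfl⟩
  · rintro ⟨i, hi, rfl⟩
    exact ⟨Ne.symm hi, i, rfl⟩

lemma ncard_neighborSet_sensGraph (f : (Fin n → Bool) → Bool) (x : Fin n → Bool) :
    ((sensGraph f).neighborSet x).ncard = #{i | f (flipB x {i}) ≠ f x} := by
  rw [neighborSet_sensGraph, Set.ncard_image_of_injective _ (flipB_single_injective x),
    Set.ncard_coe_finset]

lemma ncard_verts_starSubgraph_sensGraph (f : (Fin n → Bool) → Bool) (x : Fin n → Bool) :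
    ((sensGraph f).starSubgraph x).verts.ncard = 1 + #{i | f (flipB x {i}) ≠ f x} := by
  rw [ncard_verts_starSubgraph, ncard_neighborSet_sensGraph, add_comm]

lemma ncard_verts_starSubgraph_le_sStar (f : (Fin n → Bool) → Bool) (x : Fin n → Bool) :
    ((sensGraph f).starSubgraph x).verts.ncard ≤ sStar f := by
  have hbdd : BddAbove {m : ℕ | ∃ x : Fin n → Bool, m = 1 + #{i | f (flipB x {i}) ≠ f x}} := by
    refine ⟨1 + n, ?_⟩
    rintro _ ⟨y, rfl⟩
    simpa using card_le_univ {i | f (flipB y {i}) ≠ f y}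
  rw [ncard_verts_starSubgraph_sensGraph]
  exact le_csSup hbdd ⟨x, rfl⟩

lemma neighborSet_sensGraph_subsingleton {f : (Fin n → Bool) → Bool} (h : s0F f ≤ 1)
    {x : Fin n → Bool} (hx : f x = false) : ((sensGraph f).neighborSet x).Subsingleton := by
  have hbdd : BddAbove {m : ℕ | ∃ x : Fin n → Bool, f x = false ∧
      m = #{i | f (flipB x {i}) ≠ f x}} := by
    refine ⟨n, ?_⟩
    rintro _ ⟨y, -, rfl⟩
    simpa using card_le_univ {i | f (flipB y {i}) ≠ f y}
  rw [← Set.ncard_le_one_iff_subsingleton, ncard_neighborSet_sensGraph]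
  exact (le_csSup hbdd ⟨x, hx, rfl⟩).trans h

lemma sensGraph_eq_of_adj_of_adj {f : (Fin n → Bool) → Bool} (h : s0F f ≤ 1)
    {c u w : Fin n → Bool} (hc : f c = true) (hcu : (sensGraph f).Adj c u)
    (huw : (sensGraph f).Adj u w) : w = c := by
  have hu : f u = false := by simpa [hc] using hcu.1.symm
  exact neighborSet_sensGraph_subsingleton h hu huw hcu.symm

lemma exists_center_of_s0F_le_one {f : (Fin n → Bool) → Bool} (h : s0F f ≤ 1)
    (v : Fin n → Bool) :
    ∃ c, ∀ w, (sensGraph f).Reachable v w → w ∈ ((sensGraph f).starSubgraph c).verts := by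
  have hstar : ∀ c, f c = true → ∀ w, (sensGraph f).Reachable c w →
      w ∈ ((sensGraph f).starSubgraph c).verts := fun c hc w hw =>
    mem_starSubgraph_verts.mpr <|
      hw.eq_or_adj_of_forall_adj_adj_eq fun _ _ => sensGraph_eq_of_adj_of_adj h hc
  cases hv : f v
  · by_cases hnb : ∃ u, (sensGraph f).Adj v u
    · obtain ⟨u, hvu⟩ := hnb
      have hu : f u = true := by simpa [hv] using hvu.1.symm
      exact ⟨u, fun w hw => hstar u hu w (hvu.symm.reachable.trans hw)⟩
    · push Not at hnb
      exact ⟨v, fun w hw => mem_starSubgraph_verts.mpr <|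
        hw.eq_or_adj_of_forall_adj_adj_eq fun u _ hvu => (hnb u hvu).elim⟩
  · exact ⟨v, hstar v hv⟩

lemma ncard_verts_le_sStar {f : (Fin n → Bool) → Bool} (h : s0F f ≤ 1)
    (H : (sensGraph f).Subgraph) (hH : H.coe.Connected) : H.verts.ncard ≤ sStar f := by
  obtain ⟨⟨v, hv⟩⟩ := hH.nonempty
  obtain ⟨c, hc⟩ := exists_center_of_s0F_le_one h v
  have hsub : H.verts ⊆ ((sensGraph f).starSubgraph c).verts := fun w hw =>
    hc w ((hH.preconnected ⟨v, hv⟩ ⟨w, hw⟩).map H.hom)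
  exact (Set.ncard_le_ncard hsub).trans (ncard_verts_starSubgraph_le_sStar f c)

lemma eq_or_eq_flipB_of_starSubgraph_sensGraph_adj (f : (Fin n → Bool) → Bool) (x : Fin n → Bool)
    (i : Fin n) (a b : Fin n → Bool)
    (ha : ((sensGraph f).starSubgraph x).Adj a (flipB a {i}))
    (hb : ((sensGraph f).starSubgraph x).Adj b (flipB b {i})) :
    a = b ∨ a = flipB b {i} := by
  have hends : ∀ a, ((sensGraph f).starSubgraph x).Adj a (flipB a {i}) →
      a = x ∨ a = flipB x {i} := by
    intro a ha
    obtain ⟨-, rfl | hax⟩ := starSubgraph_adj.mp ha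
    · exact .inl rfl
    · exact .inr (by rw [← hax, flipB_flipB])
  rcases hends a ha with rfl | rfl <;> rcases hends b hb with rfl | rfl <;>
    simp [flipB_flipB]

/-- If `s₀(f) = 1`, then tree sensitivity equals sensitivity: every sensitive
tree is a star. -/
theorem treeSensitivity_eq_sensitivity_of_s0_eq_one {n : ℕ}
    (f : (Fin n → Bool) → Bool) (h : s0F f = 1) :
    tsF f = sStar f := by
  have hbound : ∀ H : (sensGraph f).Subgraph, H.coe.IsTree → H.verts.ncard ≤ sStar f :=
    fun H hH => ncard_verts_le_sStar h.le H hH.connected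
  apply le_antisymm
  · exact csSup_le' fun _ ⟨H, hm, hH, _⟩ => hm ▸ hbound H hH
  · refine csSup_le' ?_
    rintro _ ⟨x, rfl⟩
    rw [← ncard_verts_starSubgraph_sensGraph]
    exact le_csSup ⟨sStar f, fun _ ⟨H, hm, hH, _⟩ => hm ▸ hbound H hH⟩
      ⟨_, rfl, IsTree.coe_starSubgraph x, eq_or_eq_flipB_of_starSubgraph_sensGraph_adj f x⟩
end

section
/- In the g_w function (g_w(x) = i iff i appears in the first w(i) coordinates and is the first non-zero symbol; g_w(x)=0 otherwise), for any set S with 0 ∈ S and S ≠ {0} ∪ Σ: any certificate (product set containing 0^m on which g_w takes values only in S) must fix at least max_{i ∈ Σ∖S} w(i) coordinates of 0^m. -/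
/-- Any certificate proving `g_w(0^m) ∈ S` (for a proper subset `S ∋ 0` of the
alphabet) must fix at least `max_{i ∉ S} w(i)` coordinates of `0^m`. -/
theorem gw_zero_certificate_lower_bound {α : Type*} [Fintype α] [Nonempty α]
    (w : α → ℕ) (m : ℕ) (hle : ∀ i, w i ≤ m) (hmax : ∃ i, w i = m)
    (g : (Fin m → Option α) → Option α)
    (hg : ∀ (x : Fin m → Option α) (i : α), g x = some i ↔
      ∃ j : Fin m, x j = some i ∧ (j : ℕ) < w i ∧
        ∀ j' : Fin m, j' < j → x j' = none)
    (S : Set (Option α)) (h0 : none ∈ S) (hS : S ≠ Set.univ)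
    (T : Fin m → Set (Option α)) (hT0 : ∀ j, none ∈ T j)
    (hTcert : ∀ y : Fin m → Option α, (∀ j, y j ∈ T j) → g y ∈ S) :
    ∀ i : α, some i ∉ S → w i ≤ Set.ncard {j : Fin m | T j ≠ Set.univ} := by
  intro i hi
  by_contra hlt
  push_neg at hlt
  -- the set of coordinates below `w i`
  have hA : Set.ncard {j : Fin m | (j : ℕ) < w i} = w i := by
    have : {j : Fin m | (j : ℕ) < w i} =
        (Fin.castLE (hle i)) '' Set.univ := by
      ext j
      simp only [Set.mem_setOf_eq, Set.image_univ, Set.mem_range]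
      constructor
      · intro hj
        exact ⟨⟨j, hj⟩, by ext; simp⟩
      · rintro ⟨k, rfl⟩
        exact k.isLt
    rw [this, Set.ncard_image_of_injective _ (Fin.castLE_injective _),
      Set.ncard_univ, Nat.card_eq_fintype_card, Fintype.card_fin]
  -- some coordinate below `w i` is not fixed
  have hsub : ¬ {j : Fin m | (j : ℕ) < w i} ⊆ {j : Fin m | T j ≠ Set.univ} := by
    intro hsub
    have := Set.ncard_le_ncard hsub (Set.toFinite _)
    omega
  obtain ⟨j₀, hj₀lt, hj₀⟩ := Set.not_subset.mp hsub
  simp only [Set.mem_setOf_eq, not_not] at hj₀ hj₀lt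
  -- build the witness input
  set y : Fin m → Option α := fun j => if j = j₀ then some i else none with hy
  have hyT : ∀ j, y j ∈ T j := by
    intro j
    by_cases h : j = j₀
    · subst h; simp [hy, hj₀]
    · simp [hy, h, hT0 j]
  have hgy : g y = some i := by
    rw [hg]
    exact ⟨j₀, by simp [hy], hj₀lt, fun j' hj' => by simp [hy, Fin.ne_of_lt hj']⟩
  exact hi (hgy ▸ hTcert y hyT)
end

section
/- Let f : ({0} ∪ [k])^n → {0,1} be the projective plane function: each vertex of a projective plane (with n = k²−k+1 vertices and edges, vertex v's input symbol j ∈ [k] interpreted as a pointer to its j-th incident edge, 0 being the null pointer) and f(x) = 1 iff there exists an edge e all of whose k vertices point to e. Then the collection consisting of, for each edge e, the certificate fixing all k vertices of e to point at e, is an unambiguous collection of 1-certificates of size k: these certificates are pairwise inconsistent and cover f⁻¹(1). -/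
/-- The partial assignment fixing every vertex of the edge `e` to point to
`e`. -/
def edgeCert {V : Type*} [DecidableEq V] {k : ℕ}
    (ord : V → Finset V → Fin k) (e : Finset V) : V → Option (Option (Fin k)) :=
  fun v => if v ∈ e then some (some (ord v e)) else none

/-- For the projective plane function, the edge certificates form an
unambiguous collection of 1-certificates of size `k`. -/
theorem projective_plane_unambiguous_one_certificates
    {V : Type*} [Fintype V] [DecidableEq V]
    (k : ℕ) (E : Finset (Finset V))
    (hV : Fintype.card V = k ^ 2 - k + 1)
    (hE : E.card = k ^ 2 - k + 1)
    (huniform : ∀ e ∈ E, e.card = k)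
    (hdeg : ∀ v : V, (E.filter fun e => v ∈ e).card = k)
    (hpoints : ∀ v w : V, v ≠ w → ∃! e, e ∈ E ∧ v ∈ e ∧ w ∈ e)
    (hlines : ∀ e ∈ E, ∀ e' ∈ E, e ≠ e' → (e ∩ e').card = 1)
    (ord : V → Finset V → Fin k)
    (hordv : ∀ v : V, ∀ e ∈ E, ∀ e' ∈ E, v ∈ e → v ∈ e' → e ≠ e' →
      ord v e ≠ ord v e')
    (horde : ∀ e ∈ E, ∀ v ∈ e, ∀ u ∈ e, u ≠ v → ord u e ≠ ord v e)
    (f : (V → Option (Fin k)) → Bool)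
    (hf : ∀ x : V → Option (Fin k), f x = true ↔
      ∃ e ∈ E, ∀ v ∈ e, x v = some (ord v e)) :
    (∀ e ∈ E, ∀ x : V → Option (Fin k),
      (∀ v a, edgeCert ord e v = some a → x v = a) → f x = true) ∧
    (∀ x : V → Option (Fin k), f x = true →
      ∃ e ∈ E, ∀ v a, edgeCert ord e v = some a → x v = a) ∧
    (∀ e ∈ E, ∀ e' ∈ E, e ≠ e' →
      ¬∃ x : V → Option (Fin k),
        (∀ v a, edgeCert ord e v = some a → x v = a) ∧
        (∀ v a, edgeCert ord e' v = some a → x v = a)) ∧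
    (∀ e ∈ E, Set.ncard {v : V | edgeCert ord e v ≠ none} = k) := by
  refine ⟨?_, ?_, ?_, ?_⟩
  · intro e he x hx
    rw [hf]
    exact ⟨e, he, fun v hv => hx v _ (by simp [edgeCert, hv])⟩
  · intro x hx
    obtain ⟨e, he, hxe⟩ := (hf x).1 hx
    refine ⟨e, he, fun v a hva => ?_⟩
    by_cases hv : v ∈ e
    · simp [edgeCert, hv] at hva; rw [hxe v hv, hva]
    · simp [edgeCert, hv] at hva
  · rintro e he e' he' hne ⟨x, hx, hx'⟩
    have hcard := hlines e he e' he' hne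
    obtain ⟨v, hv⟩ := Finset.card_eq_one.1 hcard
    have hve : v ∈ e ∧ v ∈ e' := by
      have : v ∈ e ∩ e' := hv ▸ Finset.mem_singleton_self v
      exact Finset.mem_inter.1 this
    have h1 := hx v (some (ord v e)) (by simp [edgeCert, hve.1])
    have h2 := hx' v (some (ord v e')) (by simp [edgeCert, hve.2])
    rw [h1] at h2
    exact hordv v e he e' he' hve.1 hve.2 hne (by simpa using h2)
  · intro e he
    have : {v : V | edgeCert ord e v ≠ none} = (e : Set V) := by
      ext v; simp [edgeCert]
    rw [this]
    simp [Set.ncard_coe_finset, huniform e he]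
end

section
/- For the projective plane function f : ({0} ∪ [k])^n → {0,1} (f(x)=1 iff some edge has all its vertices pointing to it), any certificate for f(0^n) = 0 — i.e., any set S of vertices whose pointers are fixed to 0 such that every input that is 0 on S has f-value 0 — must be a vertex cover of the edge set; in particular, fixing all k vertices of any single edge to 0 is such a certificate, so C(f, 0^n) ≤ k. -/
/-!
If a set `S` of vertices misses an edge `e`, the input in which every vertex of `e` points to `e`
and every other vertex is null vanishes on `S` but has value `1`; so every certificate for `0^n`
is a vertex cover. Conversely, in a projective plane any two lines meet (and lines are nonempty),
so an input that is null on a whole line cannot have all the vertices of any line pointing to it.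
-/

namespace PointerFunction

variable {V α : Type*} [DecidableEq V]

def pointAt (ord : V → Finset V → α) (e : Finset V) : V → Option α :=
  fun v => if v ∈ e then some (ord v e) else none

variable {E : Finset (Finset V)} {ord : V → Finset V → α} {f : (V → Option α) → Bool}

theorem inter_nonempty_of_certificate
    (hf : ∀ x, f x = true ↔ ∃ e ∈ E, ∀ v ∈ e, x v = some (ord v e))
    {S : Finset V} (hS : ∀ x : V → Option α, (∀ v ∈ S, x v = none) → f x = false)
    {e : Finset V} (he : e ∈ E) : (e ∩ S).Nonempty := by
  by_contra hdisj
  have hnull : ∀ v ∈ S, pointAt ord e v = none := fun v hv => by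
    have hve : v ∉ e := fun hve => hdisj ⟨v, Finset.mem_inter.mpr ⟨hve, hv⟩⟩
    simp [pointAt, hve]
  have hsat : f (pointAt ord e) = true :=
    (hf _).mpr ⟨e, he, fun v hv => by simp [pointAt, hv]⟩
  simp [hS _ hnull] at hsat

theorem eq_false_of_null_on_edge (hE : (E : Set (Finset V)).Intersecting)
    (hf : ∀ x, f x = true ↔ ∃ e ∈ E, ∀ v ∈ e, x v = some (ord v e))
    {e : Finset V} (he : e ∈ E) {x : V → Option α} (hx : ∀ v ∈ e, x v = none) :
    f x = false := by
  rw [Bool.eq_false_iff]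
  intro hsat
  obtain ⟨e', he', hpoint⟩ := (hf x).mp hsat
  obtain ⟨w, hw⟩ := Finset.not_disjoint_iff_nonempty_inter.mp (hE he he')
  rw [Finset.mem_inter] at hw
  simpa [hx w hw.1] using hpoint w hw.2

end PointerFunction

theorem Finset.intersecting_of_card_inter_eq_one {V : Type*} [DecidableEq V]
    {E : Finset (Finset V)} (hne : ∀ e ∈ E, e.Nonempty)
    (hlines : ∀ e ∈ E, ∀ e' ∈ E, e ≠ e' → (e ∩ e').card = 1) :
    (E : Set (Finset V)).Intersecting := by
  intro e he e' he'
  rw [Finset.not_disjoint_iff_nonempty_inter]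
  rcases eq_or_ne e e' with rfl | hne'
  · simpa using hne e he
  · exact Finset.card_pos.mp (by rw [hlines e he e' he' hne']; exact Nat.one_pos)

open PointerFunction in
theorem projective_plane_zero_certificates_general
    {V : Type*} [Fintype V] [DecidableEq V]
    (k : ℕ) (E : Finset (Finset V))
    (hV : Fintype.card V = k ^ 2 - k + 1)
    (huniform : ∀ e ∈ E, e.card = k)
    (hlines : ∀ e ∈ E, ∀ e' ∈ E, e ≠ e' → (e ∩ e').card = 1)
    (ord : V → Finset V → Fin k)
    (f : (V → Option (Fin k)) → Bool)
    (hf : ∀ x : V → Option (Fin k), f x = true ↔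
      ∃ e ∈ E, ∀ v ∈ e, x v = some (ord v e)) :
    (∀ S : Finset V,
      (∀ x : V → Option (Fin k), (∀ v ∈ S, x v = none) → f x = false) →
      ∀ e ∈ E, (e ∩ S).Nonempty) ∧
    (∀ e ∈ E, ∀ x : V → Option (Fin k),
      (∀ v ∈ e, x v = none) → f x = false) := by
  obtain ⟨v⟩ : Nonempty V := Fintype.card_pos_iff.mp (by omega)
  have hk : 0 < k := (ord v ∅).pos
  have hne : ∀ e ∈ E, e.Nonempty := fun e he => Finset.card_pos.mp (huniform e he ▸ hk)
  have hE := Finset.intersecting_of_card_inter_eq_one hne hlines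
  exact ⟨fun S hS e he => inter_nonempty_of_certificate hf hS he,
    fun e he x hx => eq_false_of_null_on_edge hE hf he hx⟩

/-- For the projective plane function, any certificate for `f(0^n) = 0` that
fixes a set `S` of vertices to the null pointer must be a vertex cover of the
edge set; conversely, fixing all `k` vertices of any single edge to the null
pointer is such a certificate, so `C(f, 0^n) ≤ k`. -/
theorem projective_plane_zero_certificates
    {V : Type*} [Fintype V] [DecidableEq V]
    (k : ℕ) (E : Finset (Finset V))
    (hV : Fintype.card V = k ^ 2 - k + 1)
    (hE : E.card = k ^ 2 - k + 1)
    (huniform : ∀ e ∈ E, e.card = k)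
    (hdeg : ∀ v : V, (E.filter fun e => v ∈ e).card = k)
    (hpoints : ∀ v w : V, v ≠ w → ∃! e, e ∈ E ∧ v ∈ e ∧ w ∈ e)
    (hlines : ∀ e ∈ E, ∀ e' ∈ E, e ≠ e' → (e ∩ e').card = 1)
    (ord : V → Finset V → Fin k)
    (hordv : ∀ v : V, ∀ e ∈ E, ∀ e' ∈ E, v ∈ e → v ∈ e' → e ≠ e' →
      ord v e ≠ ord v e')
    (horde : ∀ e ∈ E, ∀ v ∈ e, ∀ u ∈ e, u ≠ v → ord u e ≠ ord v e)
    (f : (V → Option (Fin k)) → Bool)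
    (hf : ∀ x : V → Option (Fin k), f x = true ↔
      ∃ e ∈ E, ∀ v ∈ e, x v = some (ord v e)) :
    (∀ S : Finset V,
      (∀ x : V → Option (Fin k), (∀ v ∈ S, x v = none) → f x = false) →
      ∀ e ∈ E, (e ∩ S).Nonempty) ∧
    (∀ e ∈ E, ∀ x : V → Option (Fin k),
      (∀ v ∈ e, x v = none) → f x = false) :=
  projective_plane_zero_certificates_general k E hV huniform hlines ord f hf
end
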